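/- arXiv:0710.3115 — 2 statements merged into one kernel-verified Lean document; each statement's English description precedes it below -/
import Mathlib

section
/- Let λ(q) be a monic complex polynomial of degree n+1 (n ≥ 1) whose derivative λ′ has n pairwise distinct roots r_1, …, r_n (so each critical point is simple, λ″(r_k) ≠ 0). Then for every index i, the sum over k ≠ i of (λ(r_k) − λ(r_i)) / (λ″(r_k)·(r_k − r_i)²) equals (1 − n)/(2(n + 1)). -/
/-!
Write `λ - λ(a) = (X - a)² g` with `a = r i`, so `g` is monic of degree `n - 1`, `λ''(a) = 2 g(a)`
and the `k`-th summand is `g(r k) / λ''(r k)`. Since `λ' = (n + 1) ∏ₖ (X - r k)`, Lagrange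
interpolation of `g` at the `r k` gives `∑ₖ g(r k) / λ''(r k) = 1 / (n + 1)` (the residue theorem
for `g / λ'`), and removing the term `k = i`, which equals `1/2`, leaves `1/(n+1) - 1/2`.
-/

open Polynomial Finset

namespace Polynomial

variable {R : Type*} [CommRing R]

theorem sq_X_sub_C_dvd_sub_C_eval {p : R[X]} {a : R} (h : (derivative p).IsRoot a) :
    (X - C a) ^ 2 ∣ p - C (p.eval a) := by
  obtain ⟨q, hq⟩ := dvd_iff_isRoot.mpr (show (p - C (p.eval a)).IsRoot a by simp)
  have hqa : q.IsRoot a := by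
    have h' := congrArg (fun f => (derivative f).eval a) hq
    simp only [derivative_sub, derivative_C, sub_zero, derivative_mul, derivative_X, eval_add,
      eval_mul, eval_sub, eval_X, eval_C, sub_self, zero_mul, one_mul, add_zero] at h'
    exact h'.symm.trans h
  obtain ⟨g, rfl⟩ := dvd_iff_isRoot.mpr hqa
  exact ⟨g, by rw [hq]; ring⟩

theorem Monic.exists_sub_C_eval_eq_X_sub_C_sq_mul [Nontrivial R] {p : R[X]} (hp : p.Monic)
    (hdeg : 0 < p.natDegree) {a : R} (h : (derivative p).IsRoot a) :
    ∃ g : R[X], g.Monic ∧ g.natDegree = p.natDegree - 2 ∧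
      p - C (p.eval a) = (X - C a) ^ 2 * g := by
  obtain ⟨g, hg⟩ := sq_X_sub_C_dvd_sub_C_eval h
  have hsub : (p - C (p.eval a)).Monic := hp.sub_of_left (by
    rw [degree_eq_natDegree hp.ne_zero]
    exact degree_C_le.trans_lt (by exact_mod_cast hdeg))
  have hsq : ((X - C a) ^ 2 : R[X]).Monic := (monic_X_sub_C a).pow 2
  have hgm : g.Monic := hsq.of_mul_monic_left (hg ▸ hsub)
  refine ⟨g, hgm, ?_, hg⟩
  have := congrArg natDegree hg
  rw [natDegree_sub_C, hsq.natDegree_mul hgm, (monic_X_sub_C a).natDegree_pow,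
    natDegree_X_sub_C] at this
  omega

theorem eval_derivative_derivative_eq_two_mul {p g : R[X]} {a : R}
    (hg : p - C (p.eval a) = (X - C a) ^ 2 * g) :
    (derivative (derivative p)).eval a = 2 * g.eval a := by
  have hp' : derivative p = derivative ((X - C a) ^ 2 * g) := by
    rw [← hg, derivative_sub, derivative_C, sub_zero]
  simp [hp', derivative_mul, derivative_pow]

end Polynomial

namespace Lagrange

variable {F : Type*} [Field F] {ι : Type*} {s : Finset ι} {v : ι → F}

theorem eq_C_leadingCoeff_mul_nodal (hvs : Set.InjOn v s) {p : F[X]} (hdeg : p.natDegree = #s)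
    (hroot : ∀ i ∈ s, p.eval (v i) = 0) : p = C p.leadingCoeff * nodal s v := by
  rcases eq_or_ne p 0 with rfl | hp
  · simp
  refine eq_of_degree_sub_lt_of_eval_index_eq s hvs ?_ fun i hi => ?_
  · have hlc : p.leadingCoeff ≠ 0 := leadingCoeff_ne_zero.mpr hp
    have hdeg' : p.degree = #s := by rw [degree_eq_natDegree hp, hdeg]
    calc (p - C p.leadingCoeff * nodal s v).degree < p.degree :=
          degree_sub_lt_left (by rw [degree_C_mul hlc, degree_nodal, hdeg']) hp
            (by rw [leadingCoeff_mul, leadingCoeff_C, nodal_monic.leadingCoeff, mul_one])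
      _ = #s := hdeg'
  · simp [hroot i hi, eval_nodal_at_node hi]

variable [CharZero F] [DecidableEq ι]

theorem eval_derivative_derivative_eq_mul_prod (hvs : Set.InjOn v s) {p : F[X]} (hp : p.Monic)
    (hdeg : p.natDegree = #s + 1) (hroot : ∀ i ∈ s, (derivative p).eval (v i) = 0) {i : ι}
    (hi : i ∈ s) :
    (derivative (derivative p)).eval (v i) = (#s + 1) * ∏ j ∈ s.erase i, (v i - v j) := by
  have hp' : derivative p = C ((#s : F) + 1) * nodal s v := by
    rw [eq_C_leadingCoeff_mul_nodal hvs (by simp [hdeg]) hroot, leadingCoeff_derivative,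
      hp.leadingCoeff, hdeg]
    simp
  rw [hp', derivative_C_mul, eval_mul, eval_C, eval_nodal_derivative_eval_node_eq hi, eval_nodal]

/-- The residue theorem for `g / p'`: its residues at the zeros `v i` of `p'` are the summands. -/
theorem sum_eval_div_eval_derivative_derivative (hvs : Set.InjOn v s) {p : F[X]} (hp : p.Monic)
    (hdeg : p.natDegree = #s + 1) (hroot : ∀ i ∈ s, (derivative p).eval (v i) = 0) {g : F[X]}
    (hg : g.degree < #s) :
    ∑ i ∈ s, g.eval (v i) / (derivative (derivative p)).eval (v i) =
      g.coeff (#s - 1) / (#s + 1) := by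
  rw [coeff_eq_sum hvs hg, sum_div]
  refine sum_congr rfl fun i hi => ?_
  rw [eval_derivative_derivative_eq_mul_prod hvs hp hdeg hroot hi, div_div, mul_comm]

end Lagrange

/-- For a monic polynomial `λ` of degree `n+1` with `n` pairwise distinct simple
critical points `r 1, …, r n`, the sum over `k ≠ i` of
`(λ(r k) − λ(r i)) / (λ''(r k)·(r k − r i)²)` equals `(1 − n)/(2(n+1))`. -/
theorem an_central_invariant_sum (n : ℕ) (hn : 1 ≤ n) (lam : Polynomial ℂ)
    (hmonic : lam.Monic) (hdeg : lam.natDegree = n + 1)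
    (r : Fin n → ℂ) (hinj : Function.Injective r)
    (hroot : ∀ k, (derivative lam).eval (r k) = 0)
    (hsimple : ∀ k, (derivative (derivative lam)).eval (r k) ≠ 0)
    (i : Fin n) :
    ∑ k ∈ Finset.univ.erase i,
        (lam.eval (r k) - lam.eval (r i)) /
          ((derivative (derivative lam)).eval (r k) * (r k - r i) ^ 2)
      = (1 - (n : ℂ)) / (2 * ((n : ℂ) + 1)) := by
  obtain ⟨g, hgm, hgdeg, hg⟩ := hmonic.exists_sub_C_eval_eq_X_sub_C_sq_mul (by omega) (hroot i)
  replace hgdeg : g.natDegree = n - 1 := by omega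
  have hcard : #(univ : Finset (Fin n)) = n := card_fin n
  have hsum : ∑ k, g.eval (r k) / (derivative (derivative lam)).eval (r k) = 1 / (n + 1) := by
    have hglt : g.degree < #(univ : Finset (Fin n)) := by
      rw [hcard, degree_eq_natDegree hgm.ne_zero, hgdeg]; exact_mod_cast (by omega : n - 1 < n)
    rw [Lagrange.sum_eval_div_eval_derivative_derivative hinj.injOn hmonic (by rw [hcard, hdeg])
      (fun k _ => hroot k) hglt, hcard, ← hgdeg, hgm.coeff_natDegree]
  have hterm : ∀ k ∈ univ.erase i, (lam.eval (r k) - lam.eval (r i)) /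
      ((derivative (derivative lam)).eval (r k) * (r k - r i) ^ 2) =
        g.eval (r k) / (derivative (derivative lam)).eval (r k) := by
    intro k hk
    have hki : r k - r i ≠ 0 := sub_ne_zero.mpr (hinj.ne (ne_of_mem_erase hk))
    have hval : lam.eval (r k) - lam.eval (r i) = (r k - r i) ^ 2 * g.eval (r k) := by
      simpa using congrArg (eval (r k)) hg
    rw [hval, mul_comm _ ((r k - r i) ^ 2), mul_div_mul_left _ _ (pow_ne_zero 2 hki)]
  have hi : g.eval (r i) / (derivative (derivative lam)).eval (r i) = 1 / 2 := by
    have hsimple_i := hsimple i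
    rw [eval_derivative_derivative_eq_two_mul hg] at hsimple_i ⊢
    field_simp [right_ne_zero_of_mul hsimple_i]
  rw [sum_congr rfl hterm, sum_erase_eq_sub (mem_univ i), hsum, hi]
  field_simp
  ring
end

section
/- Let R be a commutative ring with derivation ∂, and consider formal pseudodifferential operators A = Σ_{i ≤ m} a_i D^i, B = Σ_{j ≤ n} b_j D^j with coefficients in R, where D satisfies D∘a = aD + ∂(a). Define res(Σ f_i D^i) = f_{−1}. Then res(AB) − res(BA) lies in the image of ∂, i.e., is a total derivative. -/
/-!
Expanding the residue, `res(AB) - res(BA)` is a sum over pairs `(i, j)` with `k = i + j + 1 ≥ 0`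
of `C(i,k) a_i ∂^k(b_j) - C(j,k) b_j ∂^k(a_i)`. The reflection `C(k - 1 - i, k) = (-1)^k C(i,k)`
turns each term into `C(i,k) (a ∂^k b - (-1)^k ∂^k a · b)`, which is a total derivative by
`k`-fold integration by parts.
-/

/-- The generalized binomial coefficient `C(i,k)` for `i : ℤ`, `k : ℕ`
(the division is exact: `k!` divides any product of `k` consecutive integers). -/
def intChoose (i : ℤ) (k : ℕ) : ℤ :=
  (∏ t ∈ Finset.range k, (i - (t : ℤ))) / (k.factorial : ℤ)

/-- The residue (coefficient of `D^{-1}`) of the product `AB` of two formal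
pseudodifferential operators `A = Σ_{i ≤ mA} a_i D^i`, `B = Σ_{j ≤ mB} b_j D^j`,
computed via `D^i ∘ b = Σ_{k ≥ 0} C(i,k) ∂^k(b) D^{i−k}`: the terms contributing to
`D^{-1}` have `k = i + j + 1`. -/
noncomputable def pdoResMul {R : Type*} [CommRing R] (d : Derivation ℤ R R)
    (a b : ℤ → R) (mA mB : ℤ) : R :=
  ∑ i ∈ Finset.Icc (-1 - mB) mA, ∑ j ∈ Finset.Icc (-1 - i) mB,
    a i * ((intChoose i (i + j + 1).toNat : ℤ) : R) * (⇑d)^[(i + j + 1).toNat] (b j)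

open Finset

lemma intChoose_eq_choose (i : ℤ) (k : ℕ) : intChoose i k = Ring.choose i k := by
  have h : ∏ t ∈ range k, (i - (t : ℤ)) = k.factorial * Ring.choose i k := by
    rw [← descPochhammer_eval_eq_prod_range, Polynomial.eval_eq_smeval,
      Ring.descPochhammer_eq_factorial_smul_choose, nsmul_eq_mul]
  rw [intChoose, h, Int.mul_ediv_cancel_left _ (by positivity)]

lemma intChoose_sub_one_sub (i : ℤ) (k : ℕ) :
    intChoose (k - 1 - i) k = (-1) ^ k * intChoose i k := by
  rw [intChoose_eq_choose, intChoose_eq_choose, show (k : ℤ) - 1 - i = -(i - k + 1) by ring,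
    Ring.choose_neg, show i - k + 1 + k - 1 = i by ring, Units.smul_def,
    Int.coe_negOnePow_natCast, smul_eq_mul]

namespace Derivation

variable {S A : Type*} [CommRing S] [CommRing A] [Algebra S A] (d : Derivation S A A)

theorem mul_iterate_sub_iterate_mul_mem_range (k : ℕ) (x y : A) :
    x * d^[k] y - (-1) ^ k * (d^[k] x * y) ∈ LinearMap.range (d : A →ₗ[S] A) := by
  induction k generalizing x with
  | zero => simp
  | succ k ih =>
    have hstep : x * d^[k + 1] y - (-1) ^ (k + 1) * (d^[k + 1] x * y) =
        d (x * d^[k] y) - (d x * d^[k] y - (-1) ^ k * (d^[k] (d x) * y)) := by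
      rw [Function.iterate_succ_apply', Function.iterate_succ_apply, leibniz, smul_eq_mul,
        smul_eq_mul]
      ring
    rw [hstep]
    exact sub_mem (LinearMap.mem_range_self _ _) (ih (d x))

theorem residue_term_sub_mem_range {i j : ℤ} (hij : 0 ≤ i + j + 1) (x y : A) :
    x * ((intChoose i (i + j + 1).toNat : ℤ) : A) * d^[(i + j + 1).toNat] y -
        y * ((intChoose j (j + i + 1).toNat : ℤ) : A) * d^[(j + i + 1).toNat] x ∈
      LinearMap.range (d : A →ₗ[S] A) := by
  rw [show j + i + 1 = i + j + 1 by ring]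
  set k := (i + j + 1).toNat
  have hj : j = k - 1 - i := by omega
  rw [hj, intChoose_sub_one_sub]
  have hterm : x * ((intChoose i k : ℤ) : A) * d^[k] y -
      y * (((-1) ^ k * intChoose i k : ℤ) : A) * d^[k] x =
        intChoose i k • (x * d^[k] y - (-1) ^ k * (d^[k] x * y)) := by
    push_cast
    rw [zsmul_eq_mul]
    ring
  rw [hterm]
  exact Submodule.smul_of_tower_mem _ _ (mul_iterate_sub_iterate_mul_mem_range d k x y)

end Derivation

lemma pdoResMul_swap {R : Type*} [CommRing R] (d : Derivation ℤ R R) (a b : ℤ → R)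
    (mA mB : ℤ) :
    pdoResMul d b a mB mA = ∑ i ∈ Icc (-1 - mB) mA, ∑ j ∈ Icc (-1 - i) mB,
      b j * ((intChoose j (j + i + 1).toNat : ℤ) : R) * (⇑d)^[(j + i + 1).toNat] (a i) := by
  rw [pdoResMul]
  refine sum_comm' fun j i => ?_
  simp only [mem_Icc]
  omega

theorem residue_commutator_total_derivative_general {R : Type*} [CommRing R]
    (d : Derivation ℤ R R) (a b : ℤ → R) (mA mB : ℤ) :
    ∃ g : R, pdoResMul d a b mA mB - pdoResMul d b a mB mA = d g := by
  suffices h : pdoResMul d a b mA mB - pdoResMul d b a mB mA ∈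
      LinearMap.range (d : R →ₗ[ℤ] R) by
    obtain ⟨g, hg⟩ := h
    exact ⟨g, hg.symm⟩
  rw [pdoResMul_swap, pdoResMul, ← sum_sub_distrib]
  refine sum_mem fun i _ => ?_
  rw [← sum_sub_distrib]
  refine sum_mem fun j hj => d.residue_term_sub_mem_range ?_ _ _
  linarith [(mem_Icc.mp hj).1]

/-- For formal pseudodifferential operators over a commutative differential ring,
`res(AB) − res(BA)` is a total derivative, i.e. lies in the image of `∂`. -/
theorem residue_commutator_total_derivative {R : Type*} [CommRing R]
    (d : Derivation ℤ R R) (a b : ℤ → R) (mA mB : ℤ)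
    (ha : ∀ i, mA < i → a i = 0) (hb : ∀ j, mB < j → b j = 0) :
    ∃ g : R, pdoResMul d a b mA mB - pdoResMul d b a mB mA = d g :=
  residue_commutator_total_derivative_general d a b mA mB
end
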